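/- arXiv:2402.08474 — 6 statements merged into one kernel-verified Lean document; each statement's English description precedes it below -/
import Mathlib

section
/- For p ∈ (1,∞), the quantity π_p defined by π_p = 2∫₀¹ (1−t^p)^{−1/p} dt equals 2π/(p·sin(π/p)). -/
open Real MeasureTheory Set intervalIntegral

theorem beta_val (s : ℝ) (hs0 : 0 < s) (hs1 : s < 1) :
    ∫ x in (0:ℝ)..1, x ^ (s - 1) * (1 - x) ^ (-s) = π / Real.sin (π * s) := by
  have h1s : 0 < 1 - s := by linarith
  have hbc : Complex.betaIntegral s (1 - s) =
      ((∫ x in (0:ℝ)..1, x ^ (s - 1) * (1 - x) ^ (-s) : ℝ) : ℂ) := by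
    rw [Complex.betaIntegral, ← intervalIntegral.integral_ofReal]
    refine intervalIntegral.integral_congr fun x hx => ?_
    rw [uIcc_of_le zero_le_one] at hx
    rw [show ((s:ℂ) - 1) = ((s - 1 : ℝ) : ℂ) by push_cast; ring,
      show (1 - (s:ℂ) - 1) = ((-s : ℝ) : ℂ) by push_cast; ring,
      show (1 - (x:ℂ)) = ((1 - x : ℝ) : ℂ) by push_cast; ring,
      ← Complex.ofReal_cpow hx.1, ← Complex.ofReal_cpow (by linarith [hx.2] : (0:ℝ) ≤ 1 - x)]
    push_cast
    ring
  have hG := Complex.Gamma_mul_Gamma_eq_betaIntegral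
    (by simpa using hs0 : 0 < (s:ℂ).re)
    (by simp [h1s] : 0 < ((1:ℂ) - s).re)
  rw [show (s:ℂ) + (1 - s) = 1 by ring, Complex.Gamma_one, one_mul] at hG
  have hR := Real.Gamma_mul_Gamma_one_sub s
  have : ((π / Real.sin (π * s) : ℝ) : ℂ) =
      ((∫ x in (0:ℝ)..1, x ^ (s - 1) * (1 - x) ^ (-s) : ℝ) : ℂ) := by
    rw [← hbc, ← hG, ← hR]
    push_cast [← Complex.Gamma_ofReal]
    norm_num
  exact_mod_cast this.symm

theorem pi_p_eq (p : ℝ) (hp : 1 < p) :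
    2 * ∫ t in (0:ℝ)..1, (1 - t ^ p) ^ (-(1 / p)) =
      2 * Real.pi / (p * Real.sin (Real.pi / p)) := by
  have hp0 : 0 < p := by linarith
  set s : ℝ := 1 / p with hs
  have hs0 : 0 < s := by positivity
  have hs1 : s < 1 := by rw [hs, div_lt_one hp0]; exact hp
  -- substitution t = u ^ s
  have himg : (fun u : ℝ => u ^ s) '' Ioo 0 1 = Ioo 0 1 := by
    ext t
    constructor
    · rintro ⟨u, hu, rfl⟩
      exact ⟨Real.rpow_pos_of_pos hu.1 _, Real.rpow_lt_one hu.1.le hu.2 hs0⟩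
    · intro ht
      refine ⟨t ^ p, ⟨Real.rpow_pos_of_pos ht.1 _, Real.rpow_lt_one ht.1.le ht.2 hp0⟩, ?_⟩
      simp only [hs, one_div]
      exact Real.rpow_rpow_inv ht.1.le hp0.ne'
  have hderiv : ∀ u ∈ Ioo (0:ℝ) 1,
      HasDerivWithinAt (fun u : ℝ => u ^ s) (s * u ^ (s - 1)) (Ioo 0 1) u := fun u hu =>
    (Real.hasDerivAt_rpow_const (Or.inl hu.1.ne')).hasDerivWithinAt
  have hinj : InjOn (fun u : ℝ => u ^ s) (Ioo 0 1) := by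
    intro u hu v hv huv
    have h2 : (u ^ s) ^ p = (v ^ s) ^ p := by simp only at huv; rw [huv]
    rwa [hs, one_div, Real.rpow_inv_rpow hu.1.le hp0.ne',
      Real.rpow_inv_rpow hv.1.le hp0.ne'] at h2
  have key : (∫ t in (0:ℝ)..1, (1 - t ^ p) ^ (-(1 / p)))
      = ∫ u in Ioo (0:ℝ) 1, |s * u ^ (s - 1)| • (1 - (u ^ s) ^ p) ^ (-(1/p)) := by
    rw [intervalIntegral.integral_of_le zero_le_one,
      MeasureTheory.integral_Ioc_eq_integral_Ioo, ← himg,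
      MeasureTheory.integral_image_eq_integral_abs_deriv_smul measurableSet_Ioo hderiv hinj, himg]
  have key2 : (∫ t in (0:ℝ)..1, (1 - t ^ p) ^ (-(1 / p)))
      = s * ∫ x in (0:ℝ)..1, x ^ (s - 1) * (1 - x) ^ (-s) := by
    rw [key, intervalIntegral.integral_of_le zero_le_one,
      MeasureTheory.integral_Ioc_eq_integral_Ioo, ← MeasureTheory.integral_const_mul]
    refine MeasureTheory.setIntegral_congr_fun measurableSet_Ioo fun u hu => ?_
    rw [hs, one_div, Real.rpow_inv_rpow hu.1.le hp0.ne']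
    rw [abs_of_pos (mul_pos (by positivity) (Real.rpow_pos_of_pos hu.1 _))]
    simp only [smul_eq_mul]
    ring
  have hsin : Real.sin (π / p) ≠ 0 :=
    (Real.sin_pos_of_pos_of_lt_pi (by positivity) (div_lt_self Real.pi_pos hp)).ne'
  rw [key2, beta_val s hs0 hs1, hs, mul_one_div, ← div_div, one_div]
  field_simp
end

section
/- The inverse function cosh_p of arccosh_p satisfies the identity |cosh_p(t)|^p − |cosh_p'(t)|^p = 1 for all t > 0. -/
open Real Set MeasureTheory intervalIntegral

lemma coshp_contAt (p : ℝ) (hp : 0 < p) :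
    ∀ s ∈ Set.Ioi (1:ℝ), ContinuousAt (fun t : ℝ => (t ^ p - 1) ^ (-(1 / p))) s := by
  intro s hs
  have hs1 : (1:ℝ) < s := hs
  have hsp : 1 < s ^ p := Real.one_lt_rpow_iff_of_pos (by linarith) |>.2 (Or.inl ⟨hs1, hp⟩)
  have hbase : ContinuousAt (fun t : ℝ => t ^ p - 1) s :=
    (Real.continuousAt_rpow_const s p (Or.inr hp.le)).sub continuousAt_const
  exact (Real.continuousAt_rpow_const _ _ (Or.inl (by linarith))).comp hbase

lemma coshp_integrable (p : ℝ) (hp : 1 < p) (x : ℝ) (hx : 1 < x) :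
    IntervalIntegrable (fun t : ℝ => (t ^ p - 1) ^ (-(1 / p))) volume 1 x := by
  have hp0 : 0 < p := lt_trans one_pos hp
  have hmeas : AEStronglyMeasurable (fun t : ℝ => (t ^ p - 1) ^ (-(1 / p)))
      (volume.restrict (Set.uIoc (1:ℝ) x)) := by
    apply ContinuousOn.aestronglyMeasurable _ measurableSet_uIoc
    intro s hs
    rw [Set.uIoc_of_le (le_of_lt hx)] at hs
    exact (coshp_contAt p hp0 s hs.1).continuousWithinAt
  have hg : IntervalIntegrable (fun t : ℝ => (t - 1) ^ (-(1 / p))) volume 1 x := by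
    have h0 : IntervalIntegrable (fun t : ℝ => t ^ (-(1 / p))) volume 0 (x - 1) := by
      apply intervalIntegrable_rpow'
      have : 1 / p < 1 := by rw [div_lt_one hp0]; exact hp
      linarith
    have := h0.comp_sub_right 1
    simpa using this
  refine hg.mono_fun hmeas ?_
  rw [Filter.EventuallyLE, ae_restrict_iff' measurableSet_uIoc]
  refine Filter.Eventually.of_forall (fun t ht => ?_)
  rw [Set.uIoc_of_le (le_of_lt hx)] at ht
  have ht1 : 1 < t := ht.1
  have htp : t ≤ t ^ p := by
    nth_rewrite 1 [← Real.rpow_one t]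
    exact Real.rpow_le_rpow_of_exponent_le (le_of_lt ht1) (le_of_lt hp)
  have h1 : (0:ℝ) < t - 1 := by linarith
  have h2 : t - 1 ≤ t ^ p - 1 := by linarith
  simp only [Real.norm_eq_abs]
  rw [abs_of_nonneg (Real.rpow_nonneg (by linarith) _),
    abs_of_nonneg (Real.rpow_nonneg (le_of_lt h1) _)]
  exact Real.rpow_le_rpow_of_nonpos h1 h2 (neg_nonpos.2 (by positivity))

theorem coshp_identity (p : ℝ) (hp : 1 < p)
    (acoshp coshp : ℝ → ℝ)
    (hacoshp : ∀ x, acoshp x = ∫ t in (1:ℝ)..x, (t ^ p - 1) ^ (-(1 / p)))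
    (hmaps : ∀ t ∈ Set.Ici (0:ℝ), coshp t ∈ Set.Ici (1:ℝ))
    (hinv : ∀ t ∈ Set.Ici (0:ℝ), acoshp (coshp t) = t)
    (hinv' : ∀ x ∈ Set.Ici (1:ℝ), coshp (acoshp x) = x)
    (hdiff : ∀ t ∈ Set.Ioi (0:ℝ), DifferentiableAt ℝ coshp t) :
    ∀ t ∈ Set.Ioi (0:ℝ), |coshp t| ^ p - |deriv coshp t| ^ p = 1 := by
  intro t ht
  have ht0 : (0:ℝ) < t := ht
  have hp0 : 0 < p := lt_trans one_pos hp
  set x := coshp t with hxdef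
  have hx1 : 1 ≤ x := hmaps t (le_of_lt ht0)
  have hx : 1 < x := by
    rcases lt_or_eq_of_le hx1 with h | h
    · exact h
    · exfalso
      have h2 : acoshp x = t := hinv t (le_of_lt ht0)
      rw [← h, hacoshp 1, intervalIntegral.integral_same] at h2
      linarith
  have hxp : 1 < x ^ p := Real.one_lt_rpow_iff_of_pos (by linarith) |>.2 (Or.inl ⟨hx, hp0⟩)
  have hderiv_a : HasDerivAt acoshp ((x ^ p - 1) ^ (-(1 / p))) x := by
    have hF : acoshp = fun u => ∫ s in (1:ℝ)..u, (s ^ p - 1) ^ (-(1 / p)) :=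
      funext hacoshp
    rw [hF]
    apply intervalIntegral.integral_hasDerivAt_right (coshp_integrable p hp x hx)
    · exact ContinuousAt.stronglyMeasurableAtFilter isOpen_Ioi (coshp_contAt p hp0) x hx
    · exact coshp_contAt p hp0 x hx
  have hderiv_c : HasDerivAt coshp (deriv coshp t) t := (hdiff t ht).hasDerivAt
  have hcomp : HasDerivAt (acoshp ∘ coshp) ((x ^ p - 1) ^ (-(1 / p)) * deriv coshp t) t :=
    hderiv_a.comp t hderiv_c
  have hid : HasDerivAt (acoshp ∘ coshp) 1 t := by
    have heq : (acoshp ∘ coshp) =ᶠ[nhds t] id := by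
      filter_upwards [eventually_gt_nhds ht0] with s hs
      exact hinv s (le_of_lt hs)
    exact (hasDerivAt_id t).congr_of_eventuallyEq heq
  have hmul : (x ^ p - 1) ^ (-(1 / p)) * deriv coshp t = 1 := hcomp.unique hid
  have hbase : (0:ℝ) < x ^ p - 1 := by linarith
  have hne : (x ^ p - 1) ^ (-(1 / p)) ≠ 0 := by positivity
  have hd : deriv coshp t = (x ^ p - 1) ^ (1 / p) := by
    have h3 : deriv coshp t = ((x ^ p - 1) ^ (-(1 / p)))⁻¹ := by
      field_simp at hmul ⊢
      linarith [hmul]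
    rw [h3, ← Real.rpow_neg (le_of_lt hbase), neg_neg]
  have hpow : ((x ^ p - 1) ^ (1 / p)) ^ p = x ^ p - 1 := by
    rw [← Real.rpow_mul (le_of_lt hbase), one_div,
      inv_mul_cancel₀ (ne_of_gt hp0), Real.rpow_one]
  rw [hd, abs_of_nonneg (Real.rpow_nonneg (le_of_lt hbase) _),
    abs_of_nonneg (by linarith : (0:ℝ) ≤ x), hpow]
  ring
end

section
/- Becker–Stark inequality: for all t with 0 ≤ t < π/2, one has 2t/(π²/4 − t²) ≤ tan t. -/
open Real

private noncomputable def bsG : ℝ → ℝ :=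
  fun t => (Real.pi ^ 2 / 4 - t ^ 2) * Real.sin t - 2 * t * Real.cos t

private lemma bsG_deriv (t : ℝ) :
    HasDerivAt bsG ((Real.pi ^ 2 / 4 - 2 - t ^ 2) * Real.cos t) t := by
  have h1 : HasDerivAt (fun t : ℝ => (Real.pi ^ 2 / 4 - t ^ 2) * Real.sin t)
      ((0 - 2 * t ^ 1) * Real.sin t + (Real.pi ^ 2 / 4 - t ^ 2) * Real.cos t) t :=
    ((hasDerivAt_const t (Real.pi ^ 2 / 4)).sub (hasDerivAt_pow 2 t)).mul (Real.hasDerivAt_sin t)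
  have h2 : HasDerivAt (fun t : ℝ => 2 * t * Real.cos t)
      (2 * Real.cos t + 2 * t * (-Real.sin t)) t := by
    have := ((hasDerivAt_id t).const_mul 2).mul (Real.hasDerivAt_cos t)
    exact this.congr_deriv (by simp only [id, mul_one])
  have := h1.sub h2
  refine this.congr_deriv ?_
  ring

private lemma bsG_nonneg (t : ℝ) (h0 : 0 ≤ t) (h1 : t ≤ Real.pi / 2) : 0 ≤ bsG t := by
  set c : ℝ := Real.sqrt (Real.pi ^ 2 / 4 - 2) with hc
  have hpi2 : (0:ℝ) ≤ Real.pi ^ 2 / 4 - 2 := by nlinarith [Real.pi_gt_three]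
  have hcsq : c ^ 2 = Real.pi ^ 2 / 4 - 2 := Real.sq_sqrt hpi2
  have hc0 : 0 ≤ c := Real.sqrt_nonneg _
  have hclt : c < Real.pi / 2 := by
    nlinarith [Real.pi_pos, Real.sq_sqrt hpi2, Real.sqrt_nonneg (Real.pi ^ 2 / 4 - 2)]
  have hcont : Continuous bsG := by
    have : ∀ x, HasDerivAt bsG ((Real.pi ^ 2 / 4 - 2 - x ^ 2) * Real.cos x) x := bsG_deriv
    exact continuous_iff_continuousAt.2 fun x => (this x).continuousAt
  have hG0 : bsG 0 = 0 := by simp [bsG]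
  have hGpi2 : bsG (Real.pi / 2) = 0 := by
    simp [bsG, Real.cos_pi_div_two]
    ring
  rcases le_total t c with ht | ht
  · -- monotone on [0, c]
    have hmono : MonotoneOn bsG (Set.Icc 0 c) := by
      apply monotoneOn_of_deriv_nonneg (convex_Icc 0 c) (hcont.continuousOn)
      · intro x hx
        exact (bsG_deriv x).differentiableAt.differentiableWithinAt
      · intro x hx
        rw [(bsG_deriv x).deriv]
        simp only [interior_Icc, Set.mem_Ioo] at hx
        have hx2 : x ^ 2 < c ^ 2 := by nlinarith [hx.1, hx.2]
        have hcos : 0 ≤ Real.cos x := by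
          apply Real.cos_nonneg_of_mem_Icc
          constructor <;> nlinarith [Real.pi_pos, hx.1, hx.2.le, hclt]
        have : 0 ≤ Real.pi ^ 2 / 4 - 2 - x ^ 2 := by nlinarith
        positivity
    have := hmono (Set.mem_Icc.2 ⟨le_refl 0, hc0⟩) (Set.mem_Icc.2 ⟨h0, ht⟩) h0
    simpa [hG0] using this
  · -- antitone on [c, π/2]
    have hanti : AntitoneOn bsG (Set.Icc c (Real.pi / 2)) := by
      apply antitoneOn_of_deriv_nonpos (convex_Icc c (Real.pi / 2)) (hcont.continuousOn)
      · intro x hx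
        exact (bsG_deriv x).differentiableAt.differentiableWithinAt
      · intro x hx
        rw [(bsG_deriv x).deriv]
        simp only [interior_Icc, Set.mem_Ioo] at hx
        have hx2 : c ^ 2 < x ^ 2 := by nlinarith [hx.1, hx.2, hc0]
        have hcos : 0 ≤ Real.cos x := by
          apply Real.cos_nonneg_of_mem_Icc
          constructor <;> nlinarith [Real.pi_pos, hx.1, hx.2.le, hc0]
        have h1 : Real.pi ^ 2 / 4 - 2 - x ^ 2 ≤ 0 := by nlinarith
        exact mul_nonpos_of_nonpos_of_nonneg h1 hcos
    have := hanti (Set.mem_Icc.2 ⟨ht, h1⟩)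
      (Set.mem_Icc.2 ⟨hclt.le, le_refl _⟩) h1
    simpa [hGpi2] using this

theorem becker_stark (t : ℝ) (h0 : 0 ≤ t) (h1 : t < Real.pi / 2) :
    2 * t / (Real.pi ^ 2 / 4 - t ^ 2) ≤ Real.tan t := by
  have hcos : 0 < Real.cos t := by
    apply Real.cos_pos_of_mem_Ioo
    constructor
    · linarith [Real.pi_pos]
    · exact h1
  have hden : 0 < Real.pi ^ 2 / 4 - t ^ 2 := by nlinarith [Real.pi_pos]
  have hG := bsG_nonneg t h0 h1.le
  rw [Real.tan_eq_sin_div_cos, div_le_div_iff₀ hden hcos]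
  have : bsG t = (Real.pi ^ 2 / 4 - t ^ 2) * Real.sin t - 2 * t * Real.cos t := rfl
  nlinarith [hG, this]
end

section
/- For p ∈ (1,∞), β < 0, s₀ > 0, the first Robin eigenvalue μ₁(β,s₀) satisfies μ₁(β,s₀) ≤ −(p−1)|β|^{p'}, where p' = p/(p−1). In particular it is negative. -/
open Real Set intervalIntegral

section muAux
open MeasureTheory

lemma holder_J (p t s₀ : ℝ) (hp : 1 < p) (hts : t < s₀) (g : ℝ → ℝ)
    (hg : ContinuousOn g (Icc t s₀)) :
    (∫ s in t..s₀, |g s|) ^ p ≤ (s₀ - t)^(p-1) * ∫ s in t..s₀, |g s|^p := by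
  set δ := s₀ - t with hδdef
  have hδ : 0 < δ := by simp only [hδdef]; linarith
  set J := ∫ s in t..s₀, |g s| with hJdef
  set K := ∫ s in t..s₀, |g s|^p with hKdef
  have hg' : ContinuousOn g (uIcc t s₀) := by rwa [uIcc_of_le hts.le]
  have hgi : IntervalIntegrable (fun s => |g s|) volume t s₀ := hg'.abs.intervalIntegrable
  have hgpc : ContinuousOn (fun s => |g s|^p) (uIcc t s₀) :=
    (hg'.abs).rpow_const (fun x hx => Or.inr (by positivity))
  have hgpi : IntervalIntegrable (fun s => |g s|^p) volume t s₀ := hgpc.intervalIntegrable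
  have hJ0 : 0 ≤ J := intervalIntegral.integral_nonneg hts.le (fun x _ => abs_nonneg _)
  have hK0 : 0 ≤ K := intervalIntegral.integral_nonneg hts.le (fun x _ => by positivity)
  rcases eq_or_lt_of_le hJ0 with h0 | hJpos
  · rw [← h0, Real.zero_rpow (by positivity)]
    positivity
  set q := p/(p-1) with hqdef
  have hp1 : (0:ℝ) < p - 1 := by linarith
  have hpq : Real.HolderConjugate p q := Real.HolderConjugate.conjExponent hp
  set c := J/δ with hcdef
  have hc : 0 < c := div_pos hJpos hδ
  have young : ∀ u ∈ Icc t s₀, |g u| * c^(p-1) ≤ |g u|^p/p + (c^(p-1))^q/q := fun u _ =>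
    Real.young_inequality_of_nonneg (abs_nonneg _) (Real.rpow_nonneg hc.le _) hpq
  have hInt : J * c^(p-1) ≤ K/p + δ * ((c^(p-1))^q/q) := by
    have h1 : IntervalIntegrable (fun s => |g s| * c^(p-1)) volume t s₀ := hgi.mul_const _
    have h2 : IntervalIntegrable (fun s => |g s|^p/p + (c^(p-1))^q/q) volume t s₀ :=
      (hgpi.div_const p).add (intervalIntegrable_const)
    have h3 := intervalIntegral.integral_mono_on hts.le h1 h2 young
    rw [intervalIntegral.integral_mul_const,
      intervalIntegral.integral_add (hgpi.div_const p) intervalIntegrable_const,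
      intervalIntegral.integral_div, intervalIntegral.integral_const, smul_eq_mul] at h3
    calc J * c^(p-1) ≤ K/p + (s₀ - t) * ((c^(p-1))^q/q) := h3
      _ = K/p + δ * ((c^(p-1))^q/q) := by rw [← hδdef]
  have hcpq : (c^(p-1))^q = c^p := by
    rw [← Real.rpow_mul hc.le]
    congr 1
    rw [hqdef]; field_simp
  have hc1 : c^(p-1) = J^(p-1)/δ^(p-1) := Real.div_rpow hJ0 hδ.le _
  have hcp : c^p = J^p/δ^p := Real.div_rpow hJ0 hδ.le _
  have hJp : J * J^(p-1) = J^p := by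
    nth_rewrite 1 [← Real.rpow_one J]
    rw [← Real.rpow_add hJpos]; ring_nf
  have hδp : δ^p = δ^(p-1) * δ := by
    nth_rewrite 3 [← Real.rpow_one δ]
    rw [← Real.rpow_add hδ]; ring_nf
  set A := J^p with hA
  set B := δ^(p-1) with hB
  have hApos : 0 < A := Real.rpow_pos_of_pos hJpos p
  have hBpos : 0 < B := Real.rpow_pos_of_pos hδ _
  rw [hcpq, hcp, hδp, hc1] at hInt
  have hL : J * (J^(p-1)/B) = A/B := by rw [mul_div_assoc', hJp]
  rw [hL] at hInt
  have hR : δ * (A/(B*δ)/q) = (A/B) * ((p-1)/p) := by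
    rw [hqdef]; field_simp
  rw [hR] at hInt
  -- now A/B ≤ K/p + (A/B)*((p-1)/p); conclude A/B ≤ K
  have hXK : A/B ≤ K := by
    have hp0 : (0:ℝ) < p := by linarith
    have h5 : p * (A/B) ≤ p * (K/p + A/B*((p-1)/p)) := mul_le_mul_of_nonneg_left hInt hp0.le
    have h6 : p * (K/p + A/B*((p-1)/p)) = K + A/B*(p-1) := by field_simp
    rw [h6] at h5
    have h7 : p * (A/B) - A/B*(p-1) = A/B := by ring
    linarith
  calc A = (A/B)*B := by field_simp
    _ ≤ K * B := mul_le_mul_of_nonneg_right hXK hBpos.le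
    _ = B * K := mul_comm _ _

lemma addpow_le (p a b : ℝ) (hp : 0 ≤ p) (ha : 0 ≤ a) (hb : 0 ≤ b) :
    (a+b)^p ≤ 2^p * (a^p + b^p) := by
  rcases le_total a b with h | h
  · calc (a+b)^p ≤ (2*b)^p := by
          apply Real.rpow_le_rpow (by linarith) (by linarith) hp
       _ = 2^p * b^p := Real.mul_rpow (by norm_num) hb
       _ ≤ 2^p * (a^p + b^p) := by
          have := Real.rpow_nonneg ha p
          have h2 : (0:ℝ) ≤ 2^p := Real.rpow_nonneg (by norm_num) p
          nlinarith
  · calc (a+b)^p ≤ (2*a)^p := by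
          apply Real.rpow_le_rpow (by linarith) (by linarith) hp
       _ = 2^p * a^p := Real.mul_rpow (by norm_num) ha
       _ ≤ 2^p * (a^p + b^p) := by
          have := Real.rpow_nonneg hb p
          have h2 : (0:ℝ) ≤ 2^p := Real.rpow_nonneg (by norm_num) p
          nlinarith

lemma trace_ineq (p t s₀ : ℝ) (hp : 1 < p) (hts : t < s₀) (v g : ℝ → ℝ)
    (hvc : ContinuousOn v (Icc t s₀)) (hgc : ContinuousOn g (Icc t s₀))
    (hd : ∀ x ∈ Ioo t s₀, HasDerivAt v (g x) x) :
    |v s₀|^p ≤ 2^p * ((∫ s in t..s₀, |v s|^p)/(s₀-t) +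
      (s₀-t)^(p-1) * ∫ s in t..s₀, |g s|^p) := by
  have hp0 : (0:ℝ) ≤ p := by linarith
  set δ := s₀ - t with hδdef
  have hδ : 0 < δ := by simp only [hδdef]; linarith
  set J := ∫ s in t..s₀, |g s| with hJdef
  set K := ∫ s in t..s₀, |g s|^p with hKdef
  set Dt := ∫ s in t..s₀, |v s|^p with hDdef
  have hg' : ContinuousOn g (uIcc t s₀) := by rwa [uIcc_of_le hts.le]
  have hv' : ContinuousOn v (uIcc t s₀) := by rwa [uIcc_of_le hts.le]
  have hgi : IntervalIntegrable (fun s => |g s|) volume t s₀ := hg'.abs.intervalIntegrable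
  have hJ0 : 0 ≤ J := intervalIntegral.integral_nonneg hts.le (fun x _ => abs_nonneg _)
  have hK0 : 0 ≤ K := intervalIntegral.integral_nonneg hts.le (fun x _ => by positivity)
  have step1 : ∀ s ∈ Icc t s₀, |v s₀| ≤ |v s| + J := by
    intro s hs
    have hss : s ≤ s₀ := hs.2
    have ftc : ∫ u in s..s₀, g u = v s₀ - v s := by
      apply intervalIntegral.integral_eq_sub_of_hasDeriv_right_of_le hss
        (hvc.mono (Icc_subset_Icc hs.1 le_rfl))
        (fun x hx => (hd x ⟨lt_of_le_of_lt hs.1 hx.1, hx.2⟩).hasDerivWithinAt)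
      exact (hg'.mono (by rw [uIcc_of_le hts.le]; exact uIcc_subset_Icc hs (right_mem_Icc.2 hts.le))).intervalIntegrable
    have h1 : |∫ u in s..s₀, g u| ≤ ∫ u in s..s₀, |g u| :=
      intervalIntegral.abs_integral_le_integral_abs hss
    have h2 : (∫ u in s..s₀, |g u|) ≤ J :=
      intervalIntegral.integral_mono_interval hs.1 hss le_rfl
        (Filter.Eventually.of_forall (fun x => abs_nonneg _)) hgi
    calc |v s₀| = |v s + (v s₀ - v s)| := by ring_nf
      _ ≤ |v s| + |v s₀ - v s| := abs_add_le _ _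
      _ = |v s| + |∫ u in s..s₀, g u| := by rw [ftc]
      _ ≤ |v s| + J := by linarith
  have step2 : ∀ s ∈ Icc t s₀, |v s₀|^p ≤ 2^p * (|v s|^p + J^p) := by
    intro s hs
    calc |v s₀|^p ≤ (|v s| + J)^p :=
          Real.rpow_le_rpow (abs_nonneg _) (step1 s hs) hp0
      _ ≤ 2^p * (|v s|^p + J^p) := addpow_le p _ _ hp0 (abs_nonneg _) hJ0
  have hvpc : ContinuousOn (fun s => |v s|^p) (uIcc t s₀) :=
    (hv'.abs).rpow_const (fun x hx => Or.inr hp0)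
  have step3 : δ * |v s₀|^p ≤ 2^p * (Dt + δ * J^p) := by
    have h1 : IntervalIntegrable (fun _ : ℝ => |v s₀|^p) volume t s₀ := intervalIntegrable_const
    have h2 : IntervalIntegrable (fun s => 2^p * (|v s|^p + J^p)) volume t s₀ :=
      ((hvpc.intervalIntegrable).add intervalIntegrable_const).const_mul _
    have h3 := intervalIntegral.integral_mono_on hts.le h1 h2 step2
    rw [intervalIntegral.integral_const, smul_eq_mul, intervalIntegral.integral_const_mul,
      intervalIntegral.integral_add hvpc.intervalIntegrable intervalIntegrable_const,
      intervalIntegral.integral_const, smul_eq_mul] at h3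
    calc δ * |v s₀|^p = (s₀ - t) * |v s₀|^p := by rw [← hδdef]
      _ ≤ 2^p * (Dt + (s₀-t) * J^p) := h3
      _ = 2^p * (Dt + δ * J^p) := by rw [← hδdef]
  have step4 : J^p ≤ δ^(p-1) * K := holder_J p t s₀ hp hts g hgc
  have h2p : (0:ℝ) ≤ 2^p := Real.rpow_nonneg (by norm_num) p
  have final : δ * |v s₀|^p ≤ δ * (2^p * (Dt/δ + δ^(p-1) * K)) := by
    have : 2^p * (Dt + δ * J^p) ≤ 2^p * (Dt + δ * (δ^(p-1)*K)) := by
      apply mul_le_mul_of_nonneg_left _ h2p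
      have := mul_le_mul_of_nonneg_left step4 hδ.le
      linarith
    have heq : δ * (2^p * (Dt/δ + δ^(p-1) * K)) = 2^p * (Dt + δ * (δ^(p-1)*K)) := by
      field_simp
    rw [heq]
    linarith [step3]
  exact le_of_mul_le_mul_left final hδ

lemma int_exp (a s₀ : ℝ) (ha : a ≠ 0) :
    ∫ s in (0:ℝ)..s₀, Real.exp (a*s) = (Real.exp (a*s₀) - 1)/a := by
  have H : ∀ x ∈ uIcc (0:ℝ) s₀, HasDerivAt (fun s => Real.exp (a*s)/a) (Real.exp (a*x)) x := by
    intro x _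
    have h1 : HasDerivAt (fun s : ℝ => a*s) a x := by simpa using (hasDerivAt_id x).const_mul a
    have h2 := (h1.exp).div_const a
    simpa [mul_div_cancel_right₀ _ ha] using h2
  rw [intervalIntegral.integral_eq_sub_of_hasDerivAt H
    ((Real.continuous_exp.comp (continuous_const.mul continuous_id)).intervalIntegrable _ _)]
  rw [mul_zero, Real.exp_zero]
  ring

lemma bdd_below_aux (p β s₀ : ℝ) (hp : 1 < p) (hβ : β < 0) (hs₀ : 0 < s₀) :
    BddBelow {r : ℝ | ∃ v : ℝ → ℝ, ContDiffOn ℝ 1 v (Set.Icc 0 s₀) ∧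
        (∫ s in (0:ℝ)..s₀, |v s| ^ p) ≠ 0 ∧
        r = ((∫ s in (0:ℝ)..s₀, |deriv v s| ^ p) + β * |v s₀| ^ p) /
              (∫ s in (0:ℝ)..s₀, |v s| ^ p)} := by
  have hp0 : (0:ℝ) < p := by linarith
  have hp1 : (0:ℝ) < p - 1 := by linarith
  have hβ' : 0 < |β| := abs_pos.2 hβ.ne
  set K2 : ℝ := 2^p with hK2def
  have hK2 : 0 < K2 := Real.rpow_pos_of_pos (by norm_num) p
  set ε : ℝ := (K2*|β|)^(-(p-1)⁻¹) with hεdef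
  have hε : 0 < ε := Real.rpow_pos_of_pos (by positivity) _
  set δ : ℝ := min s₀ ε with hδdef
  have hδ : 0 < δ := lt_min hs₀ hε
  have hδs : δ ≤ s₀ := min_le_left _ _
  have hδε : δ ≤ ε := min_le_right _ _
  have hεpow : ε^(p-1) = (K2*|β|)⁻¹ := by
    rw [hεdef, ← Real.rpow_mul (by positivity : (0:ℝ) ≤ K2*|β|),
      show -(p-1)⁻¹*(p-1) = (-1:ℝ) by field_simp, Real.rpow_neg_one]
  have hδpow : K2 * |β| * δ^(p-1) ≤ 1 := by
    have h1 : δ^(p-1) ≤ ε^(p-1) := Real.rpow_le_rpow hδ.le hδε hp1.le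
    rw [hεpow] at h1
    have h2 := mul_le_mul_of_nonneg_left h1 (by positivity : (0:ℝ) ≤ K2 * |β|)
    rw [mul_inv_cancel₀ (by positivity : K2 * |β| ≠ 0)] at h2
    linarith
  refine ⟨-(K2 * |β| / δ), fun r hr => ?_⟩
  obtain ⟨v, hv, hD0, hrval⟩ := hr
  set g : ℝ → ℝ := derivWithin v (Icc 0 s₀) with hgdef
  have hgc : ContinuousOn g (Icc 0 s₀) :=
    hv.continuousOn_derivWithin (uniqueDiffOn_Icc hs₀) le_rfl
  have hgeq : ∀ x ∈ Ioo (0:ℝ) s₀, g x = deriv v x := fun x hx =>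
    derivWithin_of_mem_nhds (Icc_mem_nhds hx.1 hx.2)
  have hd : ∀ x ∈ Ioo (0:ℝ) s₀, HasDerivAt v (g x) x := by
    intro x hx
    have h1 := (hv.differentiableOn one_ne_zero) x (Ioo_subset_Icc_self hx)
    have h2 := h1.differentiableAt (Icc_mem_nhds hx.1 hx.2)
    rw [hgeq x hx]
    exact h2.hasDerivAt
  have hvc : ContinuousOn v (Icc 0 s₀) := hv.continuousOn
  -- replace deriv by g in N
  have hN : (∫ s in (0:ℝ)..s₀, |deriv v s|^p) = ∫ s in (0:ℝ)..s₀, |g s|^p := by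
    apply intervalIntegral.integral_congr_ae
    have hae : ∀ᵐ x : ℝ, x ≠ s₀ := by
      rw [MeasureTheory.ae_iff]
      simpa using Real.volume_singleton
    filter_upwards [hae] with x hx hmem
    rw [uIoc_of_le hs₀.le] at hmem
    rw [hgeq x ⟨hmem.1, lt_of_le_of_ne hmem.2 hx⟩]
  set D := ∫ s in (0:ℝ)..s₀, |v s|^p with hDdef
  set N := ∫ s in (0:ℝ)..s₀, |g s|^p with hNdef
  have hv' : ContinuousOn v (uIcc 0 s₀) := by rwa [uIcc_of_le hs₀.le]
  have hg' : ContinuousOn g (uIcc 0 s₀) := by rwa [uIcc_of_le hs₀.le]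
  have hvpi : IntervalIntegrable (fun s => |v s|^p) volume 0 s₀ :=
    ((hv'.abs).rpow_const (fun x _ => Or.inr hp0.le)).intervalIntegrable
  have hgpi : IntervalIntegrable (fun s => |g s|^p) volume 0 s₀ :=
    ((hg'.abs).rpow_const (fun x _ => Or.inr hp0.le)).intervalIntegrable
  have hDpos : 0 < D :=
    lt_of_le_of_ne (intervalIntegral.integral_nonneg hs₀.le (fun x _ => by positivity))
      (Ne.symm hD0)
  have hN0 : 0 ≤ N := intervalIntegral.integral_nonneg hs₀.le (fun x _ => by positivity)
  -- trace inequality on [s₀ - δ, s₀]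
  set t := s₀ - δ with htdef
  have ht0 : 0 ≤ t := by simp only [htdef]; linarith
  have hts : t < s₀ := by simp only [htdef]; linarith
  have hsub : Icc t s₀ ⊆ Icc 0 s₀ := Icc_subset_Icc ht0 le_rfl
  have htr := trace_ineq p t s₀ hp hts v g (hvc.mono hsub) (hgc.mono hsub)
    (fun x hx => hd x ⟨lt_of_le_of_lt ht0 hx.1, hx.2⟩)
  have hst : s₀ - t = δ := by simp only [htdef]; ring
  rw [hst] at htr
  -- compare partial integrals with full ones
  have hDt : (∫ s in t..s₀, |v s|^p) ≤ D :=
    intervalIntegral.integral_mono_interval ht0 hts.le le_rfl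
      (Filter.Eventually.of_forall (fun x => by positivity)) hvpi
  have hKt : (∫ s in t..s₀, |g s|^p) ≤ N :=
    intervalIntegral.integral_mono_interval ht0 hts.le le_rfl
      (Filter.Eventually.of_forall (fun x => by positivity)) hgpi
  have hB : |v s₀|^p ≤ K2 * (D/δ + δ^(p-1) * N) := by
    refine htr.trans ?_
    apply mul_le_mul_of_nonneg_left _ hK2.le
    exact add_le_add ((div_le_div_iff_of_pos_right hδ).2 hDt)
      (mul_le_mul_of_nonneg_left hKt (Real.rpow_nonneg hδ.le _))
  -- conclude
  have hBnn : 0 ≤ |v s₀|^p := by positivity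
  have habs : β = -|β| := by rw [abs_of_neg hβ]; ring
  rw [hrval, le_div_iff₀ hDpos]
  have hδp0 : 0 ≤ δ^(p-1) := Real.rpow_nonneg hδ.le _
  have key : |β| * |v s₀|^p ≤ K2 * |β| * (D/δ) + (K2 * |β| * δ^(p-1))*N := by
    have := mul_le_mul_of_nonneg_left hB (abs_nonneg β)
    nlinarith [this]
  have h2 : (K2 * |β| * δ^(p-1))*N ≤ N := by
    nlinarith [hδpow, hN0]
  rw [hN]
  have hβB : β * |v s₀|^p = -(|β| * |v s₀|^p) := by rw [abs_of_neg hβ]; ring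
  have hfin : -(K2 * |β| / δ) * D = -(K2 * |β| * (D/δ)) := by ring
  linarith [key, h2, hβB, hfin]

end muAux

open MeasureTheory in
theorem mu1_le_neg (p β s₀ : ℝ) (hp : 1 < p) (hβ : β < 0) (hs₀ : 0 < s₀) :
    sInf {r : ℝ | ∃ v : ℝ → ℝ, ContDiffOn ℝ 1 v (Set.Icc 0 s₀) ∧
        (∫ s in (0:ℝ)..s₀, |v s| ^ p) ≠ 0 ∧
        r = ((∫ s in (0:ℝ)..s₀, |deriv v s| ^ p) + β * |v s₀| ^ p) /
              (∫ s in (0:ℝ)..s₀, |v s| ^ p)} ≤ -(p - 1) * |β| ^ (p / (p - 1)) := by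
  have hp0 : (0:ℝ) < p := by linarith
  have hp1 : (0:ℝ) < p - 1 := by linarith
  have hβ' : 0 < |β| := abs_pos.2 hβ.ne
  set c : ℝ := |β| ^ (p-1)⁻¹ with hcdef
  have hc : 0 < c := Real.rpow_pos_of_pos hβ' _
  set v : ℝ → ℝ := fun s => Real.exp (c*s) with hvdef
  have hvd : ∀ s : ℝ, HasDerivAt v (Real.exp (c*s) * c) s := by
    intro s
    have h1 : HasDerivAt (fun x : ℝ => c*x) c s := by simpa using (hasDerivAt_id s).const_mul c
    exact h1.exp
  have hdv : deriv v = fun s => Real.exp (c*s) * c := funext fun s => (hvd s).deriv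
  have hv : ContDiffOn ℝ 1 v (Set.Icc 0 s₀) :=
    (Real.contDiff_exp.comp (contDiff_const.mul contDiff_id)).contDiffOn
  have hexp_rpow : ∀ x : ℝ, (Real.exp x) ^ p = Real.exp (x*p) := fun x => by
    rw [Real.rpow_def_of_pos (Real.exp_pos x), Real.log_exp]
  set a : ℝ := c*p with hadef
  have ha : 0 < a := mul_pos hc hp0
  set E : ℝ := Real.exp (a*s₀) with hEdef
  have hE : 1 < E := by
    rw [hEdef, ← Real.exp_zero]
    exact Real.exp_lt_exp.2 (by positivity)
  -- value of D
  have hDval : (∫ s in (0:ℝ)..s₀, |v s| ^ p) = (E - 1)/a := by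
    rw [show (fun s => |v s| ^ p) = fun s => Real.exp (a*s) from funext fun s => by
      rw [hvdef]
      simp only [abs_of_pos (Real.exp_pos _)]
      rw [hexp_rpow]
      rw [hadef]; ring_nf]
    exact int_exp a s₀ ha.ne'
  have hNval : (∫ s in (0:ℝ)..s₀, |deriv v s| ^ p) = (E - 1)/a * c^p := by
    rw [hdv]
    rw [show (fun s => |Real.exp (c*s) * c| ^ p) = fun s => Real.exp (a*s) * c^p from
      funext fun s => by
        rw [abs_of_pos (by positivity), Real.mul_rpow (Real.exp_pos _).le hc.le, hexp_rpow]
        rw [hadef]; ring_nf]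
    rw [intervalIntegral.integral_mul_const, int_exp a s₀ ha.ne']
  have hBval : |v s₀| ^ p = E := by
    rw [hvdef]
    simp only [abs_of_pos (Real.exp_pos _)]
    rw [hexp_rpow, hEdef]
    rw [hadef]; ring_nf
  have hDpos : (0:ℝ) < (E - 1)/a := div_pos (by linarith) ha
  -- c identities
  have hcp1 : c ^ (p-1) = |β| := by
    rw [hcdef, ← Real.rpow_mul (abs_nonneg β), inv_mul_cancel₀ hp1.ne', Real.rpow_one]
  have hcp : c ^ p = |β| * c := by
    rw [show p = (p-1) + 1 by ring, Real.rpow_add hc, hcp1, Real.rpow_one]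
  have htarget : |β| ^ (p/(p-1)) = c ^ p := by
    rw [hcdef, ← Real.rpow_mul (abs_nonneg β)]
    congr 1
    field_simp
  -- show the quotient is ≤ target
  have hquot : ((∫ s in (0:ℝ)..s₀, |deriv v s| ^ p) + β * |v s₀| ^ p) /
      (∫ s in (0:ℝ)..s₀, |v s| ^ p) ≤ -(p - 1) * |β| ^ (p / (p - 1)) := by
    rw [hDval, hNval, hBval, htarget, div_le_iff₀ hDpos, hcp, ← sub_nonneg]
    have hβ2 : |β| = -β := abs_of_neg hβ
    have heq : -(p - 1) * (|β| * c) * ((E - 1) / a) - ((E - 1) / a * (|β| * c) + β * E) =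
        |β| := by
      rw [hβ2, hadef]
      field_simp
      ring
    rw [heq]
    exact abs_nonneg β
  calc sInf _ ≤ ((∫ s in (0:ℝ)..s₀, |deriv v s| ^ p) + β * |v s₀| ^ p) /
      (∫ s in (0:ℝ)..s₀, |v s| ^ p) := by
        apply csInf_le (bdd_below_aux p β s₀ hp hβ hs₀)
        exact ⟨v, hv, by rw [hDval]; exact hDpos.ne', rfl⟩
    _ ≤ -(p - 1) * |β| ^ (p / (p - 1)) := hquot
end

section
/- For p = 2, β > 0, s₀ > 0, if μ > 0 satisfies tan(√μ · s₀) = β/√μ with √μ · s₀ < π/2, then μ ≤ (π²/(4s₀²)) · 1/(1 + 2/(β s₀)). -/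
open Real

lemma my_sin_lb {x : ℝ} (hx : 0 ≤ x) : x - x ^ 3 / 6 ≤ Real.sin x := by
  have hd : ∀ y : ℝ, HasDerivAt (fun z => Real.sin z - z + z ^ 3 / 6)
      (Real.cos y - 1 + y ^ 2 / 2) y := by
    intro y
    have h := ((Real.hasDerivAt_sin y).sub (hasDerivAt_id y)).add
      ((hasDerivAt_pow 3 y).div_const 6)
    refine HasDerivAt.congr_deriv h ?_
    norm_num
    ring
  have mono : MonotoneOn (fun z => Real.sin z - z + z ^ 3 / 6) (Set.Ici 0) := by
    apply monotoneOn_of_deriv_nonneg (convex_Ici 0)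
    · exact Continuous.continuousOn (by continuity)
    · intro y hy
      exact (hd y).differentiableAt.differentiableWithinAt
    · intro y hy
      rw [(hd y).deriv]
      nlinarith [Real.one_sub_sq_div_two_le_cos (x := y)]
  have h0 : Real.sin 0 - 0 + 0 ^ 3 / 6 ≤ Real.sin x - x + x ^ 3 / 6 :=
    mono (Set.self_mem_Ici) hx hx
  simp at h0
  linarith

lemma my_cos_ub {x : ℝ} (hx : 0 ≤ x) (hx2 : x ≤ 2) :
    Real.cos x ≤ 1 - x ^ 2 / 2 + x ^ 4 / 24 := by
  have h := my_sin_lb (x := x / 2) (by linarith)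
  have hxx : x ^ 2 ≤ 4 := by nlinarith
  have hx3 : x ^ 3 ≤ 4 * x := by nlinarith [mul_nonneg hx (sub_nonneg.mpr hxx)]
  have hpos : 0 ≤ x / 2 - (x / 2) ^ 3 / 6 := by nlinarith
  have h2 : Real.cos x = 2 * Real.cos (x / 2) ^ 2 - 1 := by
    have h' := Real.cos_two_mul (x / 2)
    rw [show 2 * (x / 2) = x by ring] at h'
    exact h'
  have h3 : Real.sin (x / 2) ^ 2 + Real.cos (x / 2) ^ 2 = 1 :=
    Real.sin_sq_add_cos_sq (x / 2)
  have hc : Real.cos x = 1 - 2 * Real.sin (x / 2) ^ 2 := by linarith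
  rw [hc]
  nlinarith [pow_le_pow_left₀ hpos h 2, sq_nonneg (x ^ 3)]

lemma my_becker_stark {t : ℝ} (h0 : 0 < t) (h2 : t < Real.pi / 2) :
    2 * t * Real.cos t ≤ (Real.pi ^ 2 / 4 - t ^ 2) * Real.sin t := by
  have hpi : Real.pi > 3.141592 := Real.pi_gt_d6
  have hpi' : Real.pi < 3.141593 := Real.pi_lt_d6
  rcases le_or_gt t 1.2 with ht | ht
  · have hs := my_sin_lb h0.le
    have hc := my_cos_ub h0.le (by linarith)
    have hfac : 0 ≤ Real.pi ^ 2 / 4 - t ^ 2 := by nlinarith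
    have B : (Real.pi ^ 2 / 4 - t ^ 2) * (t - t ^ 3 / 6)
        ≤ (Real.pi ^ 2 / 4 - t ^ 2) * Real.sin t :=
      mul_le_mul_of_nonneg_left hs hfac
    have A : 2 * t * Real.cos t ≤ 2 * t * (1 - t ^ 2 / 2 + t ^ 4 / 24) := by nlinarith
    have hu : t ^ 2 ≤ 1.44 := by nlinarith
    have hpisq : (9.8696 : ℝ) ≤ Real.pi ^ 2 := by nlinarith
    have hq : 0 ≤ (Real.pi ^ 2 / 4 - 2) - Real.pi ^ 2 * t ^ 2 / 24 + t ^ 4 / 12 := by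
      nlinarith [sq_nonneg (t ^ 2 - 1.44),
        mul_nonneg (by linarith : (0:ℝ) ≤ Real.pi ^ 2 - 9.8696)
          (by linarith : (0:ℝ) ≤ 1.44 - t ^ 2)]
    have C : 2 * t * (1 - t ^ 2 / 2 + t ^ 4 / 24)
        ≤ (Real.pi ^ 2 / 4 - t ^ 2) * (t - t ^ 3 / 6) := by
      nlinarith [mul_nonneg h0.le hq]
    linarith
  · obtain ⟨s, rfl⟩ : ∃ s, t = Real.pi / 2 - s := ⟨Real.pi / 2 - t, by ring⟩
    have hs0 : 0 < s := by linarith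
    have hs1 : s < 0.3708 := by linarith
    have hsin : Real.sin s ≤ s := Real.sin_le hs0.le
    have hcos : 1 - s ^ 2 / 2 ≤ Real.cos s := Real.one_sub_sq_div_two_le_cos
    rw [Real.sin_pi_div_two_sub, Real.cos_pi_div_two_sub]
    have hsinpos : 0 ≤ Real.sin s :=
      Real.sin_nonneg_of_nonneg_of_le_pi hs0.le (by linarith)
    have h1 : 2 * (Real.pi / 2 - s) * Real.sin s ≤ (Real.pi - 2 * s) * s := by
      have hnn : 0 ≤ Real.pi - 2 * s := by linarith
      nlinarith [mul_le_mul_of_nonneg_left hsin hnn]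
    have hfac2 : 0 ≤ s * (Real.pi - s) := mul_nonneg hs0.le (by linarith)
    have h2' : s * (Real.pi - s) * (1 - s ^ 2 / 2)
        ≤ (Real.pi ^ 2 / 4 - (Real.pi / 2 - s) ^ 2) * Real.cos s := by
      nlinarith [mul_le_mul_of_nonneg_left hcos hfac2]
    have hmid : (Real.pi - 2 * s) * s ≤ s * (Real.pi - s) * (1 - s ^ 2 / 2) := by
      nlinarith [mul_nonneg (mul_nonneg hs0.le hs0.le)
        (by nlinarith : (0:ℝ) ≤ 1 - Real.pi * s / 2 + s ^ 2 / 2)]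
    linarith

theorem robin_eigenvalue_becker_stark (μ β s₀ : ℝ) (hμ : 0 < μ) (hβ : 0 < β) (hs₀ : 0 < s₀)
    (hlt : Real.sqrt μ * s₀ < Real.pi / 2)
    (heq : Real.tan (Real.sqrt μ * s₀) = β / Real.sqrt μ) :
    μ ≤ Real.pi ^ 2 / (4 * s₀ ^ 2) * (1 / (1 + 2 / (β * s₀))) := by
  have hsq : 0 < Real.sqrt μ := Real.sqrt_pos.mpr hμ
  have hsqsq : Real.sqrt μ ^ 2 = μ := Real.sq_sqrt hμ.le
  set t : ℝ := Real.sqrt μ * s₀ with htdef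
  have ht0 : 0 < t := mul_pos hsq hs₀
  have hcos : 0 < Real.cos t := Real.cos_pos_of_mem_Ioo ⟨by linarith [Real.pi_pos], hlt⟩
  have hbs := my_becker_stark ht0 hlt
  have hsin : Real.sin t = β / Real.sqrt μ * Real.cos t := by
    rw [← heq, Real.tan_eq_sin_div_cos]; field_simp
  rw [hsin] at hbs
  have hbs' : 2 * t * Real.cos t
      ≤ (Real.pi ^ 2 / 4 - t ^ 2) * (β / Real.sqrt μ) * Real.cos t := by
    rw [mul_assoc (Real.pi ^ 2 / 4 - t ^ 2)]; exact hbs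
  have hdiv : 2 * t ≤ (Real.pi ^ 2 / 4 - t ^ 2) * (β / Real.sqrt μ) :=
    le_of_mul_le_mul_right hbs' hcos
  have ht2 : t ^ 2 = μ * s₀ ^ 2 := by rw [htdef, mul_pow, hsqsq]
  have htmu : t * Real.sqrt μ = μ * s₀ := by
    rw [htdef]; nlinarith [hsqsq]
  have hkey : 2 * μ * s₀ ≤ β * (Real.pi ^ 2 / 4 - μ * s₀ ^ 2) := by
    calc 2 * μ * s₀ = 2 * t * Real.sqrt μ := by linear_combination 2 * htmu.symm
      _ ≤ (Real.pi ^ 2 / 4 - t ^ 2) * (β / Real.sqrt μ) * Real.sqrt μ :=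
          mul_le_mul_of_nonneg_right hdiv hsq.le
      _ = β * (Real.pi ^ 2 / 4 - t ^ 2) := by field_simp
      _ = β * (Real.pi ^ 2 / 4 - μ * s₀ ^ 2) := by rw [ht2]
  have hrhs : Real.pi ^ 2 / (4 * s₀ ^ 2) * (1 / (1 + 2 / (β * s₀)))
      = β * Real.pi ^ 2 / (4 * s₀ * (β * s₀ + 2)) := by
    field_simp
  rw [hrhs, le_div_iff₀ (by positivity)]
  nlinarith [hkey]
end

section
/- Let A : [0,R] → [0,∞) be absolutely continuous, nonincreasing, with A(R) = 0, and let P : [0,R] → (0,∞) be nonincreasing with A' = −P almost everywhere, A(0) = V, P(0) = P₀. Then for p ∈ (1,∞), ∫₀^R A(t)^{p/(p−1)} P(t)^{−1/(p−1)} dt ≥ ((p−1)/(2p−1)) · V^{(2p−1)/(p−1)} / P₀^{p/(p−1)}. -/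
open Real Set intervalIntegral MeasureTheory Filter Topology

theorem torsion_integral_inequality (p R V P₀ : ℝ) (hp : 1 < p) (hR : 0 < R)
    (A P : ℝ → ℝ)
    (hA : ∀ t ∈ Set.Icc (0:ℝ) R, A t = ∫ s in t..R, P s)
    (hAanti : AntitoneOn A (Set.Icc 0 R))
    (hAR : A R = 0)
    (hPpos : ∀ t ∈ Set.Icc (0:ℝ) R, 0 < P t)
    (hPanti : AntitoneOn P (Set.Icc 0 R))
    (hA0 : A 0 = V) (hP0 : P 0 = P₀) :
    (∫ t in (0:ℝ)..R, (A t) ^ (p / (p - 1)) * (P t) ^ (-(1 / (p - 1)))) ≥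
      ((p - 1) / (2 * p - 1)) * V ^ ((2 * p - 1) / (p - 1)) / P₀ ^ (p / (p - 1)) := by
  have hp1 : (0:ℝ) < p - 1 := by linarith
  set q : ℝ := p / (p - 1) with hqdef
  have hq1 : 1 < q := (one_lt_div hp1).2 (by linarith)
  have hqpos : 0 < q := by linarith
  have he : (2 * p - 1) / (p - 1) = q + 1 := by rw [hqdef]; field_simp; ring
  have hexp : -(1 / (p - 1)) = 1 - q := by rw [hqdef]; field_simp; ring
  have hepos : (0:ℝ) < q + 1 := by linarith
  have h0R : (0:ℝ) ∈ Icc (0:ℝ) R := ⟨le_rfl, hR.le⟩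
  have hRR : R ∈ Icc (0:ℝ) R := ⟨hR.le, le_rfl⟩
  have hP0pos : 0 < P₀ := hP0 ▸ hPpos 0 h0R
  have hAnonneg : ∀ t ∈ Icc (0:ℝ) R, 0 ≤ A t := fun t ht => hAR ▸ hAanti ht hRR ht.2
  -- integrability of P
  have hPuIcc : AntitoneOn P (uIcc 0 R) := by rwa [uIcc_of_le hR.le]
  have hPint : IntervalIntegrable P volume 0 R := hPuIcc.intervalIntegrable
  -- continuity of A
  have hAcont : ContinuousOn A (Icc 0 R) := by
    have h1 : IntegrableOn P (uIcc 0 R) volume := by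
      rw [uIcc_of_le hR.le, ← intervalIntegrable_iff_integrableOn_Icc_of_le hR.le]
      exact hPint
    have h2 := intervalIntegral.continuousOn_primitive_interval_left h1
    rw [uIcc_of_le hR.le] at h2
    exact h2.congr hA
  have hAq_cont : ContinuousOn (fun t => A t ^ q) (Icc 0 R) :=
    hAcont.rpow_const (fun t _ => Or.inr hqpos.le)
  -- φ = A^q * P
  set φ : ℝ → ℝ := fun t => A t ^ q * P t with hφdef
  have hφii : IntervalIntegrable φ volume 0 R := by
    apply hPint.continuousOn_mul
    rwa [uIcc_of_le hR.le]
  have hφint : IntegrableOn φ (Icc 0 R) volume := by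
    rw [← intervalIntegrable_iff_integrableOn_Icc_of_le hR.le]; exact hφii
  -- global antitone extension of P
  set Q : ℝ → ℝ := fun x => P (max (min x R) 0) with hQdef
  have hclamp_mem : ∀ x : ℝ, max (min x R) 0 ∈ Icc (0:ℝ) R :=
    fun x => ⟨le_max_right _ _, max_le (min_le_right _ _) hR.le⟩
  have hclamp_mono : Monotone (fun x : ℝ => max (min x R) 0) :=
    fun x y hxy => max_le_max (min_le_min_right _ hxy) le_rfl
  have hQanti : Antitone Q :=
    fun x y hxy => hPanti (hclamp_mem x) (hclamp_mem y) (hclamp_mono hxy)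
  have hQP : ∀ x ∈ Icc (0:ℝ) R, Q x = P x := by
    intro x hx
    simp only [hQdef, min_eq_left hx.2, max_eq_left hx.1]
  -- the auxiliary function g and its right derivative
  set g : ℝ → ℝ := fun t => -((q + 1)⁻¹ * A t ^ (q + 1)) with hgdef
  set g' : ℝ → ℝ := fun x => A x ^ q * Function.rightLim Q x with hg'def
  have hgcont : ContinuousOn g (Icc 0 R) :=
    (continuousOn_const.mul (hAcont.rpow_const (fun t _ => Or.inr hepos.le))).neg
  have hderiv : ∀ x ∈ Ioo (0:ℝ) R, HasDerivWithinAt g (g' x) (Ioi x) x := by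
    intro x hx
    have hxIcc : x ∈ Icc (0:ℝ) R := ⟨hx.1.le, hx.2.le⟩
    set c := Function.rightLim Q x with hcdef
    have hIoo_mem : Ioo x R ∈ 𝓝[>] x := Ioo_mem_nhdsGT_of_mem ⟨le_rfl, hx.2⟩
    have hIooIcc : Ioo x R ⊆ Icc (0:ℝ) R :=
      fun u hu => ⟨hx.1.le.trans hu.1.le, hu.2.le⟩
    have htc : Tendsto Q (𝓝[>] x) (𝓝 c) := hQanti.tendsto_rightLim x
    have htcP : Tendsto P (𝓝[>] x) (𝓝 c) := by
      apply htc.congr'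
      filter_upwards [hIoo_mem] with u hu
      exact hQP u (hIooIcc hu)
    have hfi : IntervalIntegrable P volume x R := by
      apply AntitoneOn.intervalIntegrable
      apply hPanti.mono
      rw [uIcc_of_le hx.2.le]
      exact Icc_subset_Icc hx.1.le le_rfl
    have hmeas : StronglyMeasurableAtFilter P (𝓝[>] x) volume := by
      refine ⟨Ioo x R, hIoo_mem, ?_⟩
      exact (aemeasurable_restrict_of_antitoneOn measurableSet_Ioo
        (hPanti.mono hIooIcc)).aestronglyMeasurable
    have hI : HasDerivWithinAt (fun u => ∫ s in u..R, P s) (-c) (Ici x) x :=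
      intervalIntegral.integral_hasDerivWithinAt_of_tendsto_ae_left hfi hmeas
        (htcP.mono_left inf_le_left)
    have hA' : HasDerivWithinAt A (-c) (Ioi x) x := by
      refine (hI.mono Ioi_subset_Ici_self).congr_of_eventuallyEq ?_ (hA x hxIcc)
      filter_upwards [hIoo_mem] with u hu
      exact hA u (hIooIcc hu)
    have h1 : HasDerivWithinAt (fun t => A t ^ (q + 1))
        (-c * (q + 1) * A x ^ (q + 1 - 1)) (Ioi x) x :=
      hA'.rpow_const (Or.inr (show (1:ℝ) ≤ q + 1 by linarith))
    have h2 := (h1.const_mul ((q + 1)⁻¹)).neg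
    convert h2 using 1
    case e'_4 => rfl
    case e'_5 => rfl
    case e'_8 => rfl
    have hq1' : q + 1 - 1 = q := by ring
    rw [hq1']
    field_simp [hg'def]
    ring
  have hφg : ∀ x ∈ Ioo (0:ℝ) R, g' x ≤ φ x := by
    intro x hx
    have hxIcc : x ∈ Icc (0:ℝ) R := ⟨hx.1.le, hx.2.le⟩
    have h1 : Function.rightLim Q x ≤ P x := by
      rw [← hQP x hxIcc]
      exact hQanti.rightLim_le le_rfl
    exact mul_le_mul_of_nonneg_left h1 (Real.rpow_nonneg (hAnonneg x hxIcc) q)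
  have main1 : (q + 1)⁻¹ * V ^ (q + 1) ≤ ∫ y in (0:ℝ)..R, φ y := by
    have := intervalIntegral.sub_le_integral_of_hasDeriv_right_of_le hR.le hgcont hderiv
      hφint hφg
    have hgR : g R = 0 := by
      simp [hgdef, hAR, Real.zero_rpow (ne_of_gt hepos)]
    have hg0 : g 0 = -((q + 1)⁻¹ * V ^ (q + 1)) := by simp [hgdef, hA0]
    rw [hgR, hg0] at this
    linarith
  -- pointwise bound
  have main2 : ∀ t ∈ Icc (0:ℝ) R, P₀ ^ (-q) * φ t ≤ A t ^ q * P t ^ (1 - q) := by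
    intro t ht
    have hPt : 0 < P t := hPpos t ht
    have hPle : P t ≤ P₀ := hP0 ▸ hPanti h0R ht ht.1
    have h1 : P₀ ^ (-q) ≤ P t ^ (-q) :=
      Real.rpow_le_rpow_of_nonpos hPt hPle (by linarith)
    have h2 : P t ^ (1 - q) = P t * P t ^ (-q) := by
      rw [show (1 - q : ℝ) = 1 + (-q) by ring, Real.rpow_add hPt, Real.rpow_one]
    have h3 : 0 ≤ A t ^ q * P t := mul_nonneg (Real.rpow_nonneg (hAnonneg t ht) q) hPt.le
    calc P₀ ^ (-q) * φ t = A t ^ q * P t * P₀ ^ (-q) := by rw [hφdef]; ring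
      _ ≤ A t ^ q * P t * P t ^ (-q) := mul_le_mul_of_nonneg_left h1 h3
      _ = A t ^ q * P t ^ (1 - q) := by rw [h2]; ring
  -- integrability of the LHS integrand
  have hψmono : MonotoneOn (fun t => P t ^ (1 - q)) (uIcc 0 R) := by
    rw [uIcc_of_le hR.le]
    intro s hs t ht hst
    exact Real.rpow_le_rpow_of_nonpos (hPpos t ht) (hPanti hs ht hst) (by linarith)
  have hψii : IntervalIntegrable (fun t => P t ^ (1 - q)) volume 0 R :=
    hψmono.intervalIntegrable
  have hLHSii : IntervalIntegrable (fun t => A t ^ q * P t ^ (1 - q)) volume 0 R := by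
    apply hψii.continuousOn_mul
    rwa [uIcc_of_le hR.le]
  -- combine
  have main3 : P₀ ^ (-q) * ∫ y in (0:ℝ)..R, φ y ≤
      ∫ t in (0:ℝ)..R, A t ^ q * P t ^ (1 - q) := by
    rw [← intervalIntegral.integral_const_mul]
    apply intervalIntegral.integral_mono_on hR.le (hφii.const_mul _) hLHSii
    exact main2
  have hP0q : 0 ≤ P₀ ^ (-q) := Real.rpow_nonneg hP0pos.le _
  have main4 : P₀ ^ (-q) * ((q + 1)⁻¹ * V ^ (q + 1)) ≤
      ∫ t in (0:ℝ)..R, A t ^ q * P t ^ (1 - q) :=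
    le_trans (mul_le_mul_of_nonneg_left main1 hP0q) main3
  rw [ge_iff_le]
  simp only [hexp, he]
  have h1 : (p - 1) / (2 * p - 1) = (q + 1)⁻¹ := by
    rw [← he, inv_div]
  have hrhs : (p - 1) / (2 * p - 1) * V ^ (q + 1) / P₀ ^ q =
      P₀ ^ (-q) * ((q + 1)⁻¹ * V ^ (q + 1)) := by
    rw [Real.rpow_neg hP0pos.le, h1]; ring
  rw [hrhs]
  exact main4
end
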